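/- (Every polynomial has a weak tensor-splitting property.) Let A₁, A₂ be unital ℂ-algebras, let S₁, T₁ ∈ A₁ be not both zero and S₂, T₂ ∈ A₂ be not both zero, let p ∈ ℂ[x,y], and let n ≥ 1. If (p^n)⟦S₁⊗S₂, T₁⊗T₂⟧ = 0 in the algebraic tensor product A₁ ⊗ A₂, then there exist complex numbers a, b, c, d and positive integers l, m such that ((p_{a,b})^l)⟦S₁,T₁⟧ = 0 in A₁ and ((p_{c,d})^m)⟦S₂,T₂⟧ = 0 in A₂, where p_{a,b}(x,y) := p(ax, by). -/

import Mathlib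

/-!
Let `I ⊆ ℂ[x,y]` be the set of `r` with `r⟦S₂,T₂⟧ = 0`. It is an ideal, since multiplying `r` by
`x^i y^j` sandwiches `r⟦S₂,T₂⟧` between `S₂^i` and `T₂^j`, and it is proper because `A₂ ≠ 0`.
By the Nullstellensatz it has a zero `(a, b)`. Evaluation at `(a, b)` kills the kernel of
`r ↦ r⟦S₂,T₂⟧`, hence factors through it: some functional `φ` on `A₂` sends `S₂^i T₂^j` to
`a^i b^j`. Applying `id ⊗ φ` to `(p^n)⟦S₁⊗S₂, T₁⊗T₂⟧ = 0` gives `((p_{a,b})^n)⟦S₁,T₁⟧ = 0`;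
the other factor is handled symmetrically.
-/

open scoped TensorProduct

/-- Ordered evaluation: for `p = Σ c_{ij} x^i y^j ∈ ℂ[x,y]` and `S, T` in a unital
ℂ-algebra, `oev p S T = Σ c_{ij} S^i T^j`, keeping all powers of `S` to the left. -/
noncomputable def oev {A : Type*} [Ring A] [Algebra ℂ A]
    (p : MvPolynomial (Fin 2) ℂ) (S T : A) : A :=
  ∑ m ∈ p.support, p.coeff m • (S ^ m 0 * T ^ m 1)

/-- `p_{a,b}(x,y) := p(ax, by)`. -/
noncomputable def scaleVars (p : MvPolynomial (Fin 2) ℂ) (a b : ℂ) :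
    MvPolynomial (Fin 2) ℂ :=
  MvPolynomial.aeval
    (![MvPolynomial.C a * MvPolynomial.X 0, MvPolynomial.C b * MvPolynomial.X 1]) p

open MvPolynomial

theorem MvPolynomial.zeroLocus_nonempty {k K σ : Type*} [Field k] [Field K] [Algebra k K]
    [IsAlgClosed K] [Finite σ] {I : Ideal (MvPolynomial σ k)} (hI : I ≠ ⊤) :
    (zeroLocus K I).Nonempty := by
  obtain ⟨M, hM, hIM⟩ := I.exists_le_maximal hI
  obtain ⟨x, rfl⟩ := eq_vanishingIdeal_singleton_of_isMaximal K hM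
  exact ⟨x, fun p hp => (mem_vanishingIdeal_singleton_iff x p).mp (hIM hp)⟩

theorem LinearMap.exists_comp_eq_of_ker_le {K V W U : Type*} [Field K] [AddCommGroup V]
    [Module K V] [AddCommGroup W] [Module K W] [AddCommGroup U] [Module K U]
    (f : V →ₗ[K] W) (g : V →ₗ[K] U) (h : LinearMap.ker f ≤ LinearMap.ker g) :
    ∃ φ : W →ₗ[K] U, φ ∘ₗ f = g := by
  obtain ⟨L, hL⟩ := ((LinearMap.ker f).liftQ f le_rfl).exists_leftInverse_of_injective
    (Submodule.ker_liftQ_eq_bot _ _ _ le_rfl)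
  refine ⟨(LinearMap.ker f).liftQ g h ∘ₗ L, ?_⟩
  ext v
  have := congr($hL (Submodule.Quotient.mk v))
  simp only [LinearMap.comp_apply, Submodule.liftQ_apply, LinearMap.id_apply] at this ⊢
  rw [this, Submodule.liftQ_apply]

section OrderedEvaluation

variable {A : Type*} [Ring A] [Algebra ℂ A]

noncomputable def oevLinearMap (S T : A) : MvPolynomial (Fin 2) ℂ →ₗ[ℂ] A :=
  (basisMonomials (Fin 2) ℂ).constr ℂ fun m => S ^ m 0 * T ^ m 1

theorem oevLinearMap_apply (S T : A) (p : MvPolynomial (Fin 2) ℂ) :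
    oevLinearMap S T p = oev p S T := by
  rw [oevLinearMap, Module.Basis.constr_apply, oev, Finsupp.sum]
  rfl

variable (S T : A)

theorem oev_add (p q : MvPolynomial (Fin 2) ℂ) : oev (p + q) S T = oev p S T + oev q S T := by
  simp only [← oevLinearMap_apply, map_add]

theorem oev_monomial (m : Fin 2 →₀ ℕ) (c : ℂ) :
    oev (monomial m c) S T = c • (S ^ m 0 * T ^ m 1) := by
  have : monomial m c = c • basisMonomials (Fin 2) ℂ m := by simp [smul_monomial]
  rw [this, ← oevLinearMap_apply, map_smul, oevLinearMap, Module.Basis.constr_basis]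

theorem oev_one : oev (1 : MvPolynomial (Fin 2) ℂ) S T = 1 := by
  simpa using oev_monomial S T 0 1

theorem oev_monomial_mul (m : Fin 2 →₀ ℕ) (c : ℂ) (r : MvPolynomial (Fin 2) ℂ) :
    oev (monomial m c * r) S T = c • (S ^ m 0 * oev r S T * T ^ m 1) := by
  induction r using MvPolynomial.induction_on' with
  | monomial m' c' =>
    rw [monomial_mul, oev_monomial, oev_monomial, Finsupp.add_apply, Finsupp.add_apply,
      pow_add, add_comm (m 1), pow_add]
    simp only [mul_smul_comm, smul_mul_assoc, smul_smul, mul_assoc]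
  | add p q hp hq => rw [mul_add, oev_add, hp, hq, oev_add, mul_add, add_mul, smul_add]

theorem oev_mul_eq_zero (g : MvPolynomial (Fin 2) ℂ) {r : MvPolynomial (Fin 2) ℂ}
    (hr : oev r S T = 0) : oev (g * r) S T = 0 := by
  induction g using MvPolynomial.induction_on' with
  | monomial m c => rw [oev_monomial_mul, hr, mul_zero, zero_mul, smul_zero]
  | add p q hp hq => rw [add_mul, oev_add, hp, hq, add_zero]

noncomputable def oevKer : Ideal (MvPolynomial (Fin 2) ℂ) where
  carrier := {r | oev r S T = 0}
  add_mem' {p q} hp hq := by simp_all [oev_add]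
  zero_mem' := by simp [oev]
  smul_mem' g _ hr := oev_mul_eq_zero S T g hr

theorem mem_oevKer {r : MvPolynomial (Fin 2) ℂ} : r ∈ oevKer S T ↔ oev r S T = 0 :=
  Iff.rfl

theorem oevKer_ne_top [Nontrivial A] : oevKer S T ≠ ⊤ := by
  rw [Ne, Ideal.eq_top_iff_one, mem_oevKer, oev_one]
  exact one_ne_zero

theorem exists_linearMap_oev_eq_eval [Nontrivial A] :
    ∃ (x : Fin 2 → ℂ) (φ : A →ₗ[ℂ] ℂ), ∀ p, φ (oev p S T) = eval x p := by
  obtain ⟨x, hx⟩ := zeroLocus_nonempty (K := ℂ) (oevKer_ne_top S T)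
  obtain ⟨φ, hφ⟩ := (oevLinearMap S T).exists_comp_eq_of_ker_le (aeval x).toLinearMap
    fun p hp => hx p ((mem_oevKer S T).mpr (by simpa [oevLinearMap_apply] using hp))
  exact ⟨x, φ, fun p => by simpa [oevLinearMap_apply] using congr($hφ p)⟩

end OrderedEvaluation

theorem scaleVars_monomial (m : Fin 2 →₀ ℕ) (c a b : ℂ) :
    scaleVars (monomial m c) a b = monomial m (c * a ^ m 0 * b ^ m 1) := by
  rw [scaleVars, aeval_monomial, Finsupp.prod_fintype _ _ fun _ => pow_zero _, Fin.prod_univ_two,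
    monomial_eq, Finsupp.prod_fintype _ _ fun _ => pow_zero _, Fin.prod_univ_two]
  simp only [Matrix.cons_val_zero, Matrix.cons_val_one, algebraMap_eq,
    mul_pow, map_mul, map_pow]
  ring

theorem scaleVars_add (p q : MvPolynomial (Fin 2) ℂ) (a b : ℂ) :
    scaleVars (p + q) a b = scaleVars p a b + scaleVars q a b :=
  map_add _ p q

theorem scaleVars_pow (p : MvPolynomial (Fin 2) ℂ) (a b : ℂ) (n : ℕ) :
    scaleVars (p ^ n) a b = scaleVars p a b ^ n :=
  map_pow _ p n

theorem map_oev {A B F : Type*} [Ring A] [Algebra ℂ A] [Ring B] [Algebra ℂ B] [FunLike F A B]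
    [AlgHomClass F ℂ A B] (f : F)
    (p : MvPolynomial (Fin 2) ℂ) (S T : A) : f (oev p S T) = oev p (f S) (f T) := by
  simp only [oev, map_sum, map_smul, map_mul, map_pow]

section TensorProduct

variable {A₁ A₂ : Type*} [Ring A₁] [Algebra ℂ A₁] [Ring A₂] [Algebra ℂ A₂]

theorem oev_tmul_comm (p : MvPolynomial (Fin 2) ℂ) (S₁ T₁ : A₁) (S₂ T₂ : A₂) :
    oev p (S₂ ⊗ₜ[ℂ] S₁) (T₂ ⊗ₜ[ℂ] T₁) =
      Algebra.TensorProduct.comm ℂ A₁ A₂ (oev p (S₁ ⊗ₜ[ℂ] S₂) (T₁ ⊗ₜ[ℂ] T₂)) := by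
  rw [map_oev, Algebra.TensorProduct.comm_tmul, Algebra.TensorProduct.comm_tmul]

theorem rid_lTensor_oev_tmul {x : Fin 2 → ℂ} {S₂ T₂ : A₂} {φ : A₂ →ₗ[ℂ] ℂ}
    (hφ : ∀ p, φ (oev p S₂ T₂) = eval x p) (p : MvPolynomial (Fin 2) ℂ) (S₁ T₁ : A₁) :
    TensorProduct.rid ℂ A₁ (φ.lTensor A₁ (oev p (S₁ ⊗ₜ[ℂ] S₂) (T₁ ⊗ₜ[ℂ] T₂))) =
      oev (scaleVars p (x 0) (x 1)) S₁ T₁ := by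
  induction p using MvPolynomial.induction_on' with
  | monomial m c =>
    have hφm := hφ (monomial m 1)
    rw [oev_monomial, eval_monomial, Finsupp.prod_fintype _ _ fun _ => pow_zero _,
      Fin.prod_univ_two, one_mul, one_smul] at hφm
    rw [oev_monomial, scaleVars_monomial, oev_monomial, Algebra.TensorProduct.tmul_pow,
      Algebra.TensorProduct.tmul_pow, Algebra.TensorProduct.tmul_mul_tmul, map_smul, map_smul,
      LinearMap.lTensor_tmul, TensorProduct.rid_tmul, hφm, smul_smul, mul_assoc]
  | add p q hp hq => rw [oev_add, map_add, map_add, hp, hq, scaleVars_add, oev_add]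

theorem exists_oev_scaleVars_eq_zero_of_oev_tmul_eq_zero [Nontrivial A₂]
    {p : MvPolynomial (Fin 2) ℂ} {S₁ T₁ : A₁} {S₂ T₂ : A₂}
    (h : oev p (S₁ ⊗ₜ[ℂ] S₂) (T₁ ⊗ₜ[ℂ] T₂) = 0) :
    ∃ a b : ℂ, oev (scaleVars p a b) S₁ T₁ = 0 := by
  obtain ⟨x, φ, hφ⟩ := exists_linearMap_oev_eq_eval S₂ T₂
  refine ⟨x 0, x 1, ?_⟩
  rw [← rid_lTensor_oev_tmul hφ, h, map_zero, map_zero]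

end TensorProduct

/-- Theorem 4.4: every polynomial has a weak tensor-splitting property. -/
theorem weak_tensor_splitting
    {A₁ A₂ : Type*} [Ring A₁] [Algebra ℂ A₁] [Ring A₂] [Algebra ℂ A₂]
    (S₁ T₁ : A₁) (S₂ T₂ : A₂)
    (h₁ : ¬(S₁ = 0 ∧ T₁ = 0)) (h₂ : ¬(S₂ = 0 ∧ T₂ = 0))
    (p : MvPolynomial (Fin 2) ℂ) (n : ℕ) (hn : 1 ≤ n)
    (h : oev (p ^ n) (S₁ ⊗ₜ[ℂ] S₂) (T₁ ⊗ₜ[ℂ] T₂) = 0) :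
    ∃ (a b c d : ℂ) (l m : ℕ), 0 < l ∧ 0 < m ∧
      oev ((scaleVars p a b) ^ l) S₁ T₁ = 0 ∧
      oev ((scaleVars p c d) ^ m) S₂ T₂ = 0 := by
  have : Nontrivial A₁ := (not_and_or.mp h₁).elim (nontrivial_of_ne _ _) (nontrivial_of_ne _ _)
  have : Nontrivial A₂ := (not_and_or.mp h₂).elim (nontrivial_of_ne _ _) (nontrivial_of_ne _ _)
  have h' : oev (p ^ n) (S₂ ⊗ₜ[ℂ] S₁) (T₂ ⊗ₜ[ℂ] T₁) = 0 := by
    rw [oev_tmul_comm, h, map_zero]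
  obtain ⟨a, b, hab⟩ := exists_oev_scaleVars_eq_zero_of_oev_tmul_eq_zero h
  obtain ⟨c, d, hcd⟩ := exists_oev_scaleVars_eq_zero_of_oev_tmul_eq_zero h'
  rw [scaleVars_pow] at hab hcd
  exact ⟨a, b, c, d, n, n, hn, hn, hab, hcd⟩
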